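/- With Aₙ as in the previous definition and α ≠ 1/2, the matrix Aₙ is invertible with inverse Aₙ⁻¹(i,j) = (-1)^{i+j}/(1-2α)^n · Aₙ(i,j). -/

import Mathlib

/-!
`Amat n α` is the transition matrix of the number of ones in an `n`-bit word sent through a
binary symmetric channel with crossover probability `α`: row `i` lists the coefficients of
`(α + (1 - α) X) ^ i * ((1 - α) + α X) ^ (n - i)`. Homogenizing these row polynomials turns the
matrix product into a linear substitution of variables, under which two channels compose to one
with crossover `α + β - 2αβ`. Crossover `0` gives the identity, so `Amat n (α / (2α - 1))` is the
inverse; and substituting `X ↦ -X` in the row polynomials shows that its entries are those of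
`Amat n α` up to the sign `(-1) ^ (i + j)` and the factor `(1 - 2α) ^ n`.
-/

noncomputable def Amat (n : ℕ) (α : ℝ) : Matrix (Fin (n+1)) (Fin (n+1)) ℝ :=
  Matrix.of fun i j : Fin (n+1) =>
    ∑ s ∈ Finset.Icc ((i : ℕ) - (j : ℕ)) (min (n - (j : ℕ)) (i : ℕ)),
      ((i : ℕ).choose s : ℝ) * ((n - (i : ℕ)).choose ((j : ℕ) + s - (i : ℕ)) : ℝ) *
        α ^ ((j : ℕ) + 2 * s - (i : ℕ)) * (1 - α) ^ (n - ((j : ℕ) + 2 * s - (i : ℕ)))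

open Polynomial Finset

section CommSemiring

variable {R : Type*} [CommSemiring R]

lemma coeff_C_add_C_mul_X_pow (a b : R) (i s : ℕ) :
    ((C a + C b * X) ^ i).coeff s = i.choose s * a ^ (i - s) * b ^ s := by
  have : C a + C b * X = (X + C a).comp (C b * X) := by simp [add_comm]
  rw [this, ← pow_comp, comp_C_mul_X_coeff, coeff_X_add_C_pow]
  ring

lemma aeval_homogenize {A : Type*} [CommSemiring A] [Algebra R A] (g : Fin 2 → A) (p : R[X])
    (n : ℕ) :
    MvPolynomial.aeval g (p.homogenize n) =
      ∑ j ∈ range (n + 1), p.coeff j • (g 0 ^ j * g 1 ^ (n - j)) := by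
  simp [homogenize, Finset.Nat.sum_antidiagonal_eq_sum_range_succ_mk,
    MvPolynomial.aeval_monomial, Algebra.smul_def]

lemma coeff_homogenize_of_le {n k : ℕ} (hk : k ≤ n) (p : R[X]) :
    (p.homogenize n).coeff (fun₀ | 0 => k | 1 => n - k) = p.coeff k := by
  simp [coeff_homogenize, hk]

end CommSemiring

section CommRing

variable {R : Type*} [CommRing R]

/-- The generating polynomial of the value of a bit that starts at `1` and is flipped with
probability `a`; `bitPoly (1 - a)` is the one of a bit that starts at `0`. -/
noncomputable def bitPoly (a : R) : R[X] := C a + C (1 - a) * X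

noncomputable def rowPoly (n : ℕ) (a : R) (i : ℕ) : R[X] :=
  bitPoly a ^ i * bitPoly (1 - a) ^ (n - i)

noncomputable def bitForm (a : R) : MvPolynomial (Fin 2) R :=
  .C a * .X 1 + .C (1 - a) * .X 0

lemma isHomogeneous_bitForm (a : R) : (bitForm a).IsHomogeneous 1 :=
  ((MvPolynomial.isHomogeneous_X R 1).C_mul a).add ((MvPolynomial.isHomogeneous_X R 0).C_mul _)

lemma homogenize_rowPoly {n i : ℕ} (hi : i ≤ n) (a : R) :
    (rowPoly n a i).homogenize n = bitForm a ^ i * bitForm (1 - a) ^ (n - i) := by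
  apply homogenize_eq_of_isHomogeneous
  · convert ((isHomogeneous_bitForm a).pow i).mul ((isHomogeneous_bitForm (1 - a)).pow (n - i))
    omega
  · simp [rowPoly, bitPoly, bitForm]

lemma aeval_bitForm (a b : R) :
    MvPolynomial.aeval ![bitForm b, bitForm (1 - b)] (bitForm a) =
      bitForm (a + b - 2 * a * b) := by
  simp only [bitForm, map_add, map_mul, MvPolynomial.aeval_C, MvPolynomial.aeval_X,
    MvPolynomial.algebraMap_eq, map_sub, map_one, map_ofNat, sub_sub_cancel,
    Matrix.cons_val_zero, Matrix.cons_val_one, Matrix.cons_val_fin_one]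
  ring

lemma sum_coeff_mul_coeff_rowPoly {n i k : ℕ} (hi : i ≤ n) (hk : k ≤ n) (a b : R) :
    ∑ j ∈ range (n + 1), (rowPoly n a i).coeff j * (rowPoly n b j).coeff k =
      (rowPoly n (a + b - 2 * a * b) i).coeff k := by
  have hflip : 1 - a + b - 2 * (1 - a) * b = 1 - (a + b - 2 * a * b) := by ring
  rw [← coeff_homogenize_of_le hk, homogenize_rowPoly hi, ← aeval_bitForm, ← hflip,
    ← aeval_bitForm, ← map_pow, ← map_pow, ← map_mul, ← homogenize_rowPoly hi,
    aeval_homogenize, MvPolynomial.coeff_sum]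
  refine sum_congr rfl fun j hj => ?_
  rw [Matrix.cons_val_zero, Matrix.cons_val_one, Matrix.cons_val_zero, MvPolynomial.coeff_smul,
    ← homogenize_rowPoly (Nat.lt_succ_iff.mp (mem_range.mp hj)), coeff_homogenize_of_le hk,
    smul_eq_mul]

end CommRing

lemma C_mul_rowPoly_div_two_mul_sub_one {K : Type*} [Field K] {a : K} (hc : 1 - 2 * a ≠ 0)
    {n i : ℕ} (hi : i ≤ n) :
    C ((1 - 2 * a) ^ n) * rowPoly n (a / (2 * a - 1)) i =
      C ((-1) ^ i) * (rowPoly n a i).comp (C (-1) * X) := by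
  have hc' : 2 * a - 1 ≠ 0 := fun h => hc (by linear_combination -h)
  have h0 : (1 - 2 * a) * (a / (2 * a - 1)) = -a := by field_simp; ring
  have h1 : (1 - 2 * a) * (1 - a / (2 * a - 1)) = 1 - a := by field_simp; ring
  have hu : C (1 - 2 * a) * bitPoly (a / (2 * a - 1)) = -(bitPoly a).comp (C (-1) * X) := by
    rw [bitPoly, bitPoly, mul_add, ← mul_assoc, ← C_mul, ← C_mul, h0, h1]
    simp only [map_neg, map_sub, map_one, neg_mul, one_mul, add_comp, C_comp, mul_comp,
      sub_comp, one_comp, X_comp, mul_neg, neg_add_rev, neg_neg]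
    ring
  have hv : C (1 - 2 * a) * bitPoly (1 - a / (2 * a - 1)) =
      (bitPoly (1 - a)).comp (C (-1) * X) := by
    rw [bitPoly, bitPoly, sub_sub_cancel, sub_sub_cancel, mul_add, ← mul_assoc, ← C_mul,
      ← C_mul, h1, h0]
    simp
  have hn : (1 - 2 * a) ^ n = (1 - 2 * a) ^ i * (1 - 2 * a) ^ (n - i) := by
    rw [← pow_add, Nat.add_sub_of_le hi]
  rw [rowPoly, rowPoly, hn, C_mul, C_pow, C_pow, mul_comp, pow_comp, pow_comp]
  calc _ = (C (1 - 2 * a) * bitPoly (a / (2 * a - 1))) ^ i *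
        (C (1 - 2 * a) * bitPoly (1 - a / (2 * a - 1))) ^ (n - i) := by ring
    _ = _ := by rw [hu, hv, neg_pow, map_pow, map_neg, map_one]; ring

/- Index `t` counts the ones that survive and `s = i - t` the ones that are flipped; the bounds on
`s` in `Amat` are exactly the range where both binomial coefficients are nonzero, and the lower
bound also keeps the truncated subtraction `j + s - i` honest. -/
lemma Amat_apply (n : ℕ) (a : ℝ) (i j : Fin (n + 1)) :
    Amat n a i j = (rowPoly n a i).coeff j := by
  have hi := i.is_le
  have hj := j.is_le
  rw [Amat, Matrix.of_apply, rowPoly, bitPoly, bitPoly, sub_sub_cancel, coeff_mul,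
    Nat.sum_antidiagonal_eq_sum_range_succ_mk]
  simp only [coeff_C_add_C_mul_X_pow]
  symm
  calc _ = ∑ t ∈ Icc ((i : ℕ) + j - n) (min i j), ((i : ℕ).choose t : ℝ) * a ^ (i - t) *
        (1 - a) ^ t * (((n - i : ℕ).choose (j - t) : ℝ) * (1 - a) ^ (n - i - (j - t)) *
        a ^ (j - t)) := by
        refine (sum_subset (fun t ht => ?_) fun t ht hnt => ?_).symm
        · simp only [mem_Icc, mem_range] at ht ⊢; omega
        · simp only [mem_Icc, mem_range, not_and_or, not_le] at ht hnt
          rcases hnt with hlt | hlt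
          · rw [Nat.choose_eq_zero_of_lt (by omega : n - i < j - t)]; simp
          · rw [Nat.choose_eq_zero_of_lt (by omega : (i : ℕ) < t)]; simp
    _ = _ := by
      refine sum_nbij' (fun t : ℕ => (i : ℕ) - t) (fun s : ℕ => (i : ℕ) - s)
        (fun t h => ?_) (fun s h => ?_) (fun t h => ?_) (fun s h => ?_) fun t h => ?_
      all_goals simp only [mem_Icc] at h ⊢
      iterate 4 omega
      have e2 : (j : ℕ) + (i - t) - i = j - t := by omega
      have e3 : (j : ℕ) + 2 * (i - t) - i = (i - t) + (j - t) := by omega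
      have e4 : n - ((i - t) + (j - t)) = t + (n - i - (j - t)) := by omega
      rw [Nat.choose_symm (by omega), e2, e3, e4, pow_add, pow_add]
      ring

lemma Amat_mul (n : ℕ) (a b : ℝ) : Amat n a * Amat n b = Amat n (a + b - 2 * a * b) := by
  ext i k
  rw [Matrix.mul_apply, Amat_apply, ← sum_coeff_mul_coeff_rowPoly i.is_le k.is_le,
    ← Fin.sum_univ_eq_sum_range (fun j => (rowPoly n a i).coeff j * (rowPoly n b j).coeff k)]
  simp only [Amat_apply]

lemma Amat_zero (n : ℕ) : Amat n 0 = 1 := by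
  ext i j
  simp [Amat_apply, rowPoly, bitPoly, Matrix.one_apply, coeff_X_pow, Fin.ext_iff, eq_comm]

lemma Amat_div_two_mul_sub_one (n : ℕ) {a : ℝ} (hc : 1 - 2 * a ≠ 0) :
    Amat n (a / (2 * a - 1)) = Matrix.of fun i j : Fin (n + 1) =>
      (-1 : ℝ) ^ ((i : ℕ) + (j : ℕ)) / (1 - 2 * a) ^ n * Amat n a i j := by
  ext i j
  have h := congrArg (coeff · j) (C_mul_rowPoly_div_two_mul_sub_one hc i.is_le)
  simp only [coeff_C_mul, comp_C_mul_X_coeff] at h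
  rw [Matrix.of_apply, Amat_apply, Amat_apply, pow_add, div_mul_eq_mul_div,
    eq_div_iff (pow_ne_zero n hc)]
  linear_combination h

theorem stmt_6 (n : ℕ) (α : ℝ) (hα : α ≠ 1/2) :
    IsUnit (Amat n α) ∧
      (Amat n α)⁻¹ = Matrix.of fun i j : Fin (n+1) =>
        (-1 : ℝ) ^ ((i : ℕ) + (j : ℕ)) / (1 - 2*α)^n * Amat n α i j := by
  have hc : 1 - 2 * α ≠ 0 := fun h => hα (by linarith)
  have hc' : 2 * α - 1 ≠ 0 := fun h => hα (by linarith)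
  have hinv : Amat n α * Amat n (α / (2 * α - 1)) = 1 := by
    rw [Amat_mul, ← Amat_zero n]
    congr 1
    linear_combination -div_mul_cancel₀ α hc'
  rw [← Amat_div_two_mul_sub_one n hc]
  exact ⟨.of_mul_eq_one _ hinv, Matrix.inv_eq_right_inv hinv⟩
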